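/- arXiv:2307.07967 — 3 statements merged into one kernel-verified Lean document; each statement's English description precedes it below -/
import Mathlib

section
/- Let m, k ≥ 1 and let A ∈ SL(2mk,ℂ) be the block-diagonal sum of k copies of the Jordan block J(1,2m). Then: (i) every g ∈ GL(2mk,ℂ) with gAg⁻¹ = A⁻¹ and g² = I satisfies det(g) = (−1)^{mk}; (ii) consequently, if m and k are both odd, then A is not strongly reversible in SL(2mk,ℂ). -/
open Matrix in
lemma aux_det {n k : ℕ} (hn : 0 < n)
    (N g : Matrix (Fin n × Fin k) (Fin n × Fin k) ℂ)
    (hN : ∀ x y : Fin n × Fin k, N x y =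
      if x.2 = y.2 ∧ (y.1 : ℕ) = (x.1 : ℕ) + 1 then 1 else 0)
    (hrel : N * g + g * N + N * g * N = 0)
    (hg2 : g * g = 1) :
    ∃ d : ℂ, d * d = 1 ∧
      g.det = ((-1 : ℂ) ^ (∑ i ∈ Finset.range n, i)) ^ k * d ^ n := by
  classical
  -- left multiplication by N
  have hNM : ∀ (M : Matrix (Fin n × Fin k) (Fin n × Fin k) ℂ) (x y : Fin n × Fin k),
      (N * M) x y = if h : (x.1 : ℕ) + 1 < n then M (⟨(x.1 : ℕ) + 1, h⟩, x.2) y else 0 := by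
    intro M x y
    rw [Matrix.mul_apply]
    split
    · rename_i h
      rw [Finset.sum_eq_single ((⟨(x.1 : ℕ) + 1, h⟩, x.2) : Fin n × Fin k)]
      · rw [hN]; simp
      · intro z _ hz
        rw [hN, if_neg, zero_mul]
        rintro ⟨h1, h2⟩
        exact hz (Prod.ext_iff.mpr ⟨Fin.ext h2, h1.symm⟩)
      · intro h; simp at h
    · rename_i h
      apply Finset.sum_eq_zero
      intro z _
      rw [hN, if_neg, zero_mul]
      rintro ⟨h1, h2⟩
      exact h (h2 ▸ z.1.isLt)
  -- right multiplication by N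
  have hMN : ∀ (M : Matrix (Fin n × Fin k) (Fin n × Fin k) ℂ) (x y : Fin n × Fin k),
      (M * N) x y = if h : 0 < (y.1 : ℕ) then
        M x (⟨(y.1 : ℕ) - 1, Nat.lt_of_le_of_lt (Nat.sub_le _ _) y.1.isLt⟩, y.2) else 0 := by
    intro M x y
    rw [Matrix.mul_apply]
    split
    · rename_i h
      rw [Finset.sum_eq_single ((⟨(y.1 : ℕ) - 1,
          Nat.lt_of_le_of_lt (Nat.sub_le _ _) y.1.isLt⟩, y.2) : Fin n × Fin k)]
      · rw [hN]; simp; omega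
      · intro z _ hz
        rw [hN, if_neg, mul_zero]
        rintro ⟨h1, h2⟩
        refine hz (Prod.ext_iff.mpr ⟨Fin.ext ?_, h1⟩)
        simp; omega
      · intro h; simp at h
    · rename_i h
      apply Finset.sum_eq_zero
      intro z _
      rw [hN, if_neg, mul_zero]
      rintro ⟨h1, h2⟩
      omega
  -- block entries of g
  set B : ℕ → ℕ → Matrix (Fin k) (Fin k) ℂ := fun i j =>
    Matrix.of fun b c => if hi : i < n then if hj : j < n then
      g (⟨i, hi⟩, b) (⟨j, hj⟩, c) else 0 else 0 with hB
  have hBhigh : ∀ i j : ℕ, ¬ i < n → B i j = 0 := by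
    intro i j h; ext b c; simp [hB, dif_neg h]
  have hBg : ∀ (i j : ℕ) (hi : i < n) (hj : j < n) (b c : Fin k),
      B i j b c = g (⟨i, hi⟩, b) (⟨j, hj⟩, c) := by
    intro i j hi hj b c; simp [hB, dif_pos hi, dif_pos hj]
  -- bridging lemmas
  have hNgB : ∀ (i j : ℕ) (hi : i < n) (hj : j < n) (b c : Fin k),
      (N * g) (⟨i, hi⟩, b) (⟨j, hj⟩, c) = B (i + 1) j b c := by
    intro i j hi hj b c
    rw [hNM]
    by_cases h : i + 1 < n
    · rw [dif_pos h, hBg _ _ h hj]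
    · rw [dif_neg h, hBhigh _ _ h]; simp
  have hgNB : ∀ (i j : ℕ) (hi : i < n) (hj : j + 1 < n) (b c : Fin k),
      (g * N) (⟨i, hi⟩, b) (⟨j + 1, hj⟩, c) = B i j b c := by
    intro i j hi hj b c
    rw [hMN]
    rw [dif_pos (Nat.succ_pos j), hBg _ _ hi (show j < n by omega)]
    simp
  have hNgNB : ∀ (i j : ℕ) (hi : i < n) (hj : j + 1 < n) (b c : Fin k),
      (N * g * N) (⟨i, hi⟩, b) (⟨j + 1, hj⟩, c) = B (i + 1) j b c := by
    intro i j hi hj b c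
    rw [hMN (N * g)]
    rw [dif_pos (Nat.succ_pos j)]
    exact hNgB _ _ hi (by omega) b c
  -- the fundamental recurrence
  have L1 : ∀ (i j : ℕ) (hi : i < n) (hj : j + 1 < n),
      B (i + 1) (j + 1) + B i j + B (i + 1) j = 0 := by
    intro i j hi hj
    ext b c
    have h0 := congrFun (congrFun hrel ((⟨i, hi⟩, b))) ((⟨j + 1, hj⟩, c))
    simp only [Matrix.add_apply, Matrix.zero_apply] at h0
    rw [hNgB _ _ hi hj, hgNB _ _ hi hj, hNgNB _ _ hi hj] at h0
    simpa [Matrix.add_apply] using h0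
  have L2 : ∀ (i : ℕ) (hi : i < n), B (i + 1) 0 = 0 := by
    intro i hi
    ext b c
    have h0 := congrFun (congrFun hrel ((⟨i, hi⟩, b))) ((⟨0, hn⟩, c))
    simp only [Matrix.add_apply, Matrix.zero_apply] at h0
    rw [hNgB _ _ hi hn, hMN g, hMN (N * g)] at h0
    simp only [dif_neg (lt_irrefl 0)] at h0
    simpa using h0
  -- triangularity
  have L3 : ∀ j i : ℕ, j < i → B i j = 0 := by
    intro j
    induction j with
    | zero =>
      intro i hi
      obtain ⟨i', rfl⟩ : ∃ i', i = i' + 1 := ⟨i - 1, by omega⟩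
      by_cases h : i' < n
      · exact L2 i' h
      · exact hBhigh _ _ (by omega)
    | succ j ih =>
      intro i hi
      obtain ⟨i', rfl⟩ : ∃ i', i = i' + 1 := ⟨i - 1, by omega⟩
      by_cases h : i' < n
      · by_cases hj : j + 1 < n
        · have h1 := L1 i' j h hj
          rw [ih i' (by omega), ih (i' + 1) (by omega)] at h1
          simpa using h1
        · ext b c
          simp [hB, hj]
      · exact hBhigh _ _ (by omega)
  -- alternating diagonal blocks
  have L4 : ∀ i : ℕ, i + 1 < n → B (i + 1) (i + 1) = - B i i := by
    intro i h
    have h1 := L1 i i (by omega) h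
    rw [L3 i (i + 1) (by omega), add_zero] at h1
    exact eq_neg_of_add_eq_zero_left h1
  have L5 : ∀ i : ℕ, i < n → B i i = (-1 : ℂ) ^ i • B 0 0 := by
    intro i
    induction i with
    | zero => intro _; simp
    | succ i ih =>
      intro h
      rw [L4 i h, ih (by omega)]
      ext b c
      simp only [Matrix.neg_apply, Matrix.smul_apply, smul_eq_mul, pow_succ]
      ring
  -- entry-level triangularity
  have hge : ∀ (a b : Fin n) (bb cc : Fin k), (b : ℕ) < (a : ℕ) → g (a, bb) (b, cc) = 0 := by
    intro a b bb cc h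
    have h2 : B (a : ℕ) (b : ℕ) bb cc = 0 := by rw [L3 (b : ℕ) (a : ℕ) h]; rfl
    rw [hBg _ _ a.isLt b.isLt] at h2
    simpa using h2
  -- diagonal blocks are involutions
  have L6 : ∀ (i : ℕ) (hi : i < n), B i i * B i i = 1 := by
    intro i hi
    ext b c
    have h0 := congrFun (congrFun hg2 (⟨i, hi⟩, b)) (⟨i, hi⟩, c)
    rw [Matrix.mul_apply, Fintype.sum_prod_type] at h0
    rw [Finset.sum_eq_single (⟨i, hi⟩ : Fin n)] at h0
    · rw [Matrix.mul_apply, Matrix.one_apply]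
      rw [Matrix.one_apply] at h0
      simp only [Prod.mk.injEq, Fin.mk.injEq, true_and] at h0
      rw [← h0]
      apply Finset.sum_congr rfl
      intro d _
      rw [hBg _ _ hi hi, hBg _ _ hi hi]
    · intro l _ hl
      apply Finset.sum_eq_zero
      intro d _
      rcases Nat.lt_or_ge (l : ℕ) i with hc | hc
      · rw [hge ⟨i, hi⟩ l b d hc, zero_mul]
      · have hc2 : i < (l : ℕ) := by
          rcases Nat.eq_or_lt_of_le hc with hc' | hc'
          · exact absurd (Fin.ext hc'.symm) hl
          · exact hc'
        rw [hge l ⟨i, hi⟩ d c hc2, mul_zero]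
    · intro h; simp at h
  -- determinant via block triangularity
  have htri : g.BlockTriangular Prod.fst := by
    intro x y h
    have := hge x.1 y.1 x.2 y.2 h
    simpa using this
  have hdet := htri.det_fintype
  have hsq : ∀ a : Fin n, ((g.toSquareBlock Prod.fst a).det : ℂ) = (B (a : ℕ) (a : ℕ)).det := by
    intro a
    rw [← Matrix.det_submatrix_equiv_self
      (⟨fun c => ⟨(a, c), rfl⟩, fun x => x.1.2, fun c => rfl, fun x => by
          rcases x with ⟨⟨x1, x2⟩, hx⟩
          simp only at hx
          subst hx
          rfl⟩ : Fin k ≃ {x : Fin n × Fin k // x.1 = a})]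
    congr 1
    ext b c
    rw [hBg _ _ a.isLt a.isLt]
    simp [Matrix.toSquareBlock_def, Matrix.submatrix_apply]
  refine ⟨(B 0 0).det, ?_, ?_⟩
  · have := congrArg Matrix.det (L6 0 hn)
    rwa [Matrix.det_mul, Matrix.det_one] at this
  · rw [hdet]
    calc (∏ a : Fin n, (g.toSquareBlock Prod.fst a).det)
        = ∏ a : Fin n, ((-1 : ℂ) ^ (a : ℕ)) ^ k * (B 0 0).det := by
          apply Finset.prod_congr rfl
          intro a _
          rw [hsq a, L5 (a : ℕ) a.isLt, Matrix.det_smul, Fintype.card_fin]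
      _ = ((-1 : ℂ) ^ (∑ i ∈ Finset.range n, i)) ^ k * (B 0 0).det ^ n := by
          rw [Finset.prod_mul_distrib, Finset.prod_const, Finset.prod_pow,
            Finset.prod_pow_eq_pow_sum, Fin.sum_univ_eq_sum_range (fun i => i) n]
          simp [Finset.card_univ]

/-- The Jordan block `J(λ, m)`. -/
noncomputable def jordanBlock (lam : ℂ) (m : ℕ) : Matrix (Fin m) (Fin m) ℂ :=
  Matrix.of fun i j => if (j : ℕ) = (i : ℕ) then lam
    else if (j : ℕ) = (i : ℕ) + 1 then 1 else 0

/-- Let `A ∈ SL(2mk, ℂ)` be the block diagonal sum of `k` copies of `J(1, 2m)` (realized over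
the index type `Fin (2m) × Fin k`). Then (i) every involution `g ∈ GL(2mk, ℂ)` with
`g A g⁻¹ = A⁻¹` has `det g = (-1)^{mk}`; (ii) if `m` and `k` are both odd,
`A` is not strongly reversible in `SL(2mk, ℂ)`. -/
theorem unipotent_homogeneous_det_and_not_strongly_reversible {m k : ℕ}
    (hm : 1 ≤ m) (hk : 1 ≤ k)
    (A : Matrix.SpecialLinearGroup (Fin (2 * m) × Fin k) ℂ)
    (hA : (A : Matrix (Fin (2 * m) × Fin k) (Fin (2 * m) × Fin k) ℂ) =
      Matrix.blockDiagonal fun _ : Fin k => jordanBlock 1 (2 * m)) :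
    (∀ g : Matrix (Fin (2 * m) × Fin k) (Fin (2 * m) × Fin k) ℂ,
        g * (A : Matrix (Fin (2 * m) × Fin k) (Fin (2 * m) × Fin k) ℂ) * g⁻¹ =
          (A : Matrix (Fin (2 * m) × Fin k) (Fin (2 * m) × Fin k) ℂ)⁻¹ →
        g * g = 1 → g.det = (-1) ^ (m * k)) ∧
    (Odd m → Odd k →
      ¬ ∃ g : Matrix.SpecialLinearGroup (Fin (2 * m) × Fin k) ℂ,
        g * g = 1 ∧ g * A * g⁻¹ = A⁻¹) := by
  have hAdet : ((A : Matrix (Fin (2 * m) × Fin k) (Fin (2 * m) × Fin k) ℂ)).det = 1 :=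
    Matrix.SpecialLinearGroup.det_coe A
  have hAinv : (A : Matrix (Fin (2 * m) × Fin k) (Fin (2 * m) × Fin k) ℂ) *
      (A : Matrix (Fin (2 * m) × Fin k) (Fin (2 * m) × Fin k) ℂ)⁻¹ = 1 :=
    Matrix.mul_nonsing_inv _ (by rw [hAdet]; exact isUnit_one)
  have part1 : ∀ g : Matrix (Fin (2 * m) × Fin k) (Fin (2 * m) × Fin k) ℂ,
      g * (A : Matrix (Fin (2 * m) × Fin k) (Fin (2 * m) × Fin k) ℂ) * g⁻¹ =
        (A : Matrix (Fin (2 * m) × Fin k) (Fin (2 * m) × Fin k) ℂ)⁻¹ →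
      g * g = 1 → g.det = (-1) ^ (m * k) := by
    intro g hconj hg2
    rw [Matrix.inv_eq_right_inv hg2] at hconj
    -- A * g * A = g
    have h1 : (A : Matrix (Fin (2 * m) × Fin k) (Fin (2 * m) × Fin k) ℂ) * g *
        (A : Matrix (Fin (2 * m) × Fin k) (Fin (2 * m) × Fin k) ℂ) = g := by
      have h2 : (A : Matrix (Fin (2 * m) × Fin k) (Fin (2 * m) × Fin k) ℂ) *
          (g * (A : Matrix (Fin (2 * m) × Fin k) (Fin (2 * m) × Fin k) ℂ) * g) * g =
          (A : Matrix (Fin (2 * m) × Fin k) (Fin (2 * m) × Fin k) ℂ) *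
          (A : Matrix (Fin (2 * m) × Fin k) (Fin (2 * m) × Fin k) ℂ)⁻¹ * g := by
        rw [hconj]
      rw [hAinv, one_mul] at h2
      calc (A : Matrix (Fin (2 * m) × Fin k) (Fin (2 * m) × Fin k) ℂ) * g *
            (A : Matrix (Fin (2 * m) × Fin k) (Fin (2 * m) × Fin k) ℂ)
          = (A : Matrix (Fin (2 * m) × Fin k) (Fin (2 * m) × Fin k) ℂ) * g *
            (A : Matrix (Fin (2 * m) × Fin k) (Fin (2 * m) × Fin k) ℂ) * 1 := (mul_one _).symm
        _ = (A : Matrix (Fin (2 * m) × Fin k) (Fin (2 * m) × Fin k) ℂ) * g *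
            (A : Matrix (Fin (2 * m) × Fin k) (Fin (2 * m) × Fin k) ℂ) * (g * g) := by rw [hg2]
        _ = (A : Matrix (Fin (2 * m) × Fin k) (Fin (2 * m) × Fin k) ℂ) *
            (g * (A : Matrix (Fin (2 * m) × Fin k) (Fin (2 * m) × Fin k) ℂ) * g) * g := by
            simp only [mul_assoc]
        _ = g := h2
    obtain ⟨N, hNdef⟩ : ∃ N : Matrix (Fin (2 * m) × Fin k) (Fin (2 * m) × Fin k) ℂ,
      N = (A : Matrix (Fin (2 * m) × Fin k) (Fin (2 * m) × Fin k) ℂ) - 1 := ⟨_, rfl⟩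
    have hA1 : (A : Matrix (Fin (2 * m) × Fin k) (Fin (2 * m) × Fin k) ℂ) = 1 + N := by
      rw [hNdef]; abel
    have hrel : N * g + g * N + N * g * N = 0 := by
      have h3 : (1 + N) * g * (1 + N) = g := by rw [← hA1]; exact h1
      have h4 : (1 + N) * g * (1 + N) = g + (N * g + g * N + N * g * N) := by
        noncomm_ring
      rw [h3] at h4
      have h5 : g + 0 = g + (N * g + g * N + N * g * N) := by rw [add_zero]; exact h4
      exact (add_left_cancel h5).symm
    have hNe : ∀ x y : Fin (2 * m) × Fin k, N x y =
        if x.2 = y.2 ∧ (y.1 : ℕ) = (x.1 : ℕ) + 1 then 1 else 0 := by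
      rintro ⟨i, b⟩ ⟨j, c⟩
      have hAe := congrFun (congrFun hA (i, b)) (j, c)
      rw [Matrix.blockDiagonal_apply] at hAe
      rw [hNdef, Matrix.sub_apply, hAe, Matrix.one_apply]
      clear hAe
      simp only [jordanBlock, Matrix.of_apply, Prod.mk.injEq, Fin.ext_iff]
      split_ifs <;> (try norm_num) <;> (try exfalso) <;> omega
    obtain ⟨d, hd, hdet⟩ := aux_det (by omega) N g hNe hrel hg2
    rw [hdet]
    have hsum : (∑ i ∈ Finset.range (2 * m), i) = m * (2 * m - 1) := by
      have h2 := Finset.sum_range_id_mul_two (2 * m)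
      have h3 : 2 * m * (2 * m - 1) = m * (2 * m - 1) * 2 := by
        generalize (2 * m - 1) = t; ring
      exact Nat.eq_of_mul_eq_mul_right (by norm_num) (h2.trans h3)
    have hdn : d ^ (2 * m) = 1 := by
      rw [pow_mul, pow_two, hd, one_pow]
    rw [hsum, hdn, mul_one]
    have hexp : m * (2 * m - 1) * k = (2 * m - 1) * (m * k) := by
      generalize (2 * m - 1) = t; ring
    rw [← pow_mul, hexp, pow_mul]
    have hodd : ((-1 : ℂ)) ^ (2 * m - 1) = -1 :=
      Odd.neg_one_pow ⟨m - 1, by omega⟩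
    rw [hodd]
  refine ⟨part1, ?_⟩
  rintro hmo hko ⟨g, hg2, hrev⟩
  have hgg : (g : Matrix (Fin (2 * m) × Fin k) (Fin (2 * m) × Fin k) ℂ) *
      (g : Matrix (Fin (2 * m) × Fin k) (Fin (2 * m) × Fin k) ℂ) = 1 := by
    rw [← Matrix.SpecialLinearGroup.coe_mul, hg2]; rfl
  have hginv : ((g : Matrix (Fin (2 * m) × Fin k) (Fin (2 * m) × Fin k) ℂ))⁻¹ =
      ((g⁻¹ : Matrix.SpecialLinearGroup (Fin (2 * m) × Fin k) ℂ) :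
        Matrix (Fin (2 * m) × Fin k) (Fin (2 * m) × Fin k) ℂ) := by
    apply Matrix.inv_eq_right_inv
    rw [← Matrix.SpecialLinearGroup.coe_mul, mul_inv_cancel]; rfl
  have hAinv2 : ((A : Matrix (Fin (2 * m) × Fin k) (Fin (2 * m) × Fin k) ℂ))⁻¹ =
      ((A⁻¹ : Matrix.SpecialLinearGroup (Fin (2 * m) × Fin k) ℂ) :
        Matrix (Fin (2 * m) × Fin k) (Fin (2 * m) × Fin k) ℂ) := by
    apply Matrix.inv_eq_right_inv
    rw [← Matrix.SpecialLinearGroup.coe_mul, mul_inv_cancel]; rfl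
  have hc : (g : Matrix (Fin (2 * m) × Fin k) (Fin (2 * m) × Fin k) ℂ) *
      (A : Matrix (Fin (2 * m) × Fin k) (Fin (2 * m) × Fin k) ℂ) *
      ((g : Matrix (Fin (2 * m) × Fin k) (Fin (2 * m) × Fin k) ℂ))⁻¹ =
      ((A : Matrix (Fin (2 * m) × Fin k) (Fin (2 * m) × Fin k) ℂ))⁻¹ := by
    rw [hginv, hAinv2, ← Matrix.SpecialLinearGroup.coe_mul,
      ← Matrix.SpecialLinearGroup.coe_mul, hrev]
  have hd := part1 _ hc hgg
  rw [Matrix.SpecialLinearGroup.det_coe] at hd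
  have : ((-1 : ℂ)) ^ (m * k) = -1 := Odd.neg_one_pow (hmo.mul hko)
  rw [this] at hd
  norm_num at hd
end

section
/- Let λ ∈ ℂ∖{0,1,−1} and let A = A₁ ⊕ A₂ ∈ SL(2n,ℂ) be block diagonal, where A₁ ∈ GL(n,ℂ) has λ as its only eigenvalue and A₂ ∈ GL(n,ℂ) has λ⁻¹ as its only eigenvalue. If g ∈ GL(2n,ℂ) is an involution with gAg⁻¹ = A⁻¹, then det(g) = (−1)ⁿ. -/
open Matrix Polynomial in
private lemma aux_eval_cp {m : ℕ} (M : Matrix (Fin m) (Fin m) ℂ) (μ : ℂ) :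
    M.charpoly.eval μ = (μ • (1 : Matrix (Fin m) (Fin m) ℂ) - M).det := by
  rw [Matrix.charpoly, ← Polynomial.coe_evalRingHom, RingHom.map_det]
  congr 1
  ext i j
  by_cases h : i = j
  · subst h; simp [charmatrix_apply_eq, Matrix.one_apply]
  · simp [charmatrix_apply_ne _ _ _ h, Matrix.one_apply, h]

private lemma aux_pow_blocks {m : ℕ} (X Y : Matrix (Fin m) (Fin m) ℂ) (k : ℕ) :
    (Matrix.fromBlocks X 0 0 Y) ^ k = Matrix.fromBlocks (X ^ k) 0 0 (Y ^ k) := by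
  induction k with
  | zero => simp [Matrix.fromBlocks_one]
  | succ k ih => rw [pow_succ, pow_succ, pow_succ, ih, Matrix.fromBlocks_multiply]; simp

private lemma aux_mid_zero {m : ℕ} (M N p : Matrix (Fin m) (Fin m) ℂ) (hM : IsUnit M.det)
    (hN : IsUnit N.det) (h : M * p * N = 0) : p = 0 := by
  have h2 : M⁻¹ * (M * p * N) * N⁻¹ = 0 := by rw [h]; simp
  rwa [← Matrix.mul_assoc, ← Matrix.mul_assoc, Matrix.nonsing_inv_mul M hM, Matrix.one_mul,
    Matrix.mul_assoc, Matrix.mul_nonsing_inv N hN, Matrix.mul_one] at h2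

private lemma aux_detJ {m : ℕ} :
    (Matrix.fromBlocks 0 (1 : Matrix (Fin m) (Fin m) ℂ) 1 0).det = (-1) ^ m := by
  classical
  set K : Matrix Bool Bool ℂ := Matrix.of fun i j => if i = j then 0 else 1 with hK
  have hKdet : K.det = -1 := by
    have : K.submatrix finTwoEquiv finTwoEquiv = !![(0:ℂ),1;1,0] := by
      ext i j
      fin_cases i <;> fin_cases j <;> simp [hK, finTwoEquiv]
    have h2 := Matrix.det_submatrix_equiv_self finTwoEquiv K
    rw [this] at h2
    rw [← h2, Matrix.det_fin_two_of]
    ring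
  have hrein : Matrix.fromBlocks 0 (1 : Matrix (Fin m) (Fin m) ℂ) 1 0 =
      Matrix.reindex (Equiv.boolProdEquivSum (Fin m)) (Equiv.boolProdEquivSum (Fin m))
        (Matrix.kroneckerMap (· * ·) K 1) := by
    ext i j
    rcases i with i | i <;> rcases j with j | j <;>
      simp [Matrix.kroneckerMap, Equiv.boolProdEquivSum, hK, Matrix.one_apply,
        Matrix.fromBlocks]
  rw [hrein, Matrix.det_reindex_self, Matrix.det_kronecker, hKdet]
  simp

private lemma aux_conj_pow {m : Type*} [Fintype m] [DecidableEq m]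
    (A g X Y : Matrix m m ℂ) (c : ℂ)
    (h : A * g * X = c • (Y * g)) (hAY : A * Y = Y * A) (k : ℕ) :
    A ^ k * g * X ^ k = c ^ k • (Y ^ k * g) := by
  induction k with
  | zero => simp
  | succ k ih =>
    have hAkY : A ^ k * Y = Y * A ^ k := Commute.pow_left hAY k
    calc A ^ (k+1) * g * X ^ (k+1)
        = A ^ k * (A * g * X) * X ^ k := by
          rw [pow_succ, pow_succ']
          noncomm_ring
      _ = c • (A ^ k * Y * (g * X ^ k)) := by
          rw [h]; rw [Matrix.mul_smul, Matrix.smul_mul]; noncomm_ring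
      _ = c • (Y * (A ^ k * g * X ^ k)) := by rw [hAkY]; noncomm_ring
      _ = c ^ (k+1) • (Y ^ (k+1) * g) := by
          rw [ih, Matrix.mul_smul, smul_smul, pow_succ, pow_succ']
          ring_nf
          noncomm_ring

/-- Let `λ ∉ {0, 1, -1}` and `A = A₁ ⊕ A₂ ∈ SL(2n, ℂ)` (block diagonal, realized over the
index type `Fin n ⊕ Fin n`), where `A₁` has `λ` as its only eigenvalue (characteristic
polynomial `(X - λ)ⁿ`) and `A₂` has `λ⁻¹` as its only eigenvalue. If `g ∈ GL(2n, ℂ)` is an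
involution with `g A g⁻¹ = A⁻¹`, then `det g = (-1)ⁿ`. -/
theorem det_involution_reversing_lambda_pair {n : ℕ} (hn : 1 ≤ n) (lam : ℂ)
    (hlam0 : lam ≠ 0) (hlam1 : lam ≠ 1) (hlam2 : lam ≠ -1)
    (A₁ A₂ : Matrix (Fin n) (Fin n) ℂ)
    (hA₁ : A₁.charpoly = (Polynomial.X - Polynomial.C lam) ^ n)
    (hA₂ : A₂.charpoly = (Polynomial.X - Polynomial.C lam⁻¹) ^ n)
    (hdet : (Matrix.fromBlocks A₁ 0 0 A₂).det = 1)
    (g : Matrix (Fin n ⊕ Fin n) (Fin n ⊕ Fin n) ℂ) (hg2 : g * g = 1)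
    (hrev : g * Matrix.fromBlocks A₁ 0 0 A₂ * g⁻¹ = (Matrix.fromBlocks A₁ 0 0 A₂)⁻¹) :
    g.det = (-1) ^ n := by
  classical
  set A : Matrix (Fin n ⊕ Fin n) (Fin n ⊕ Fin n) ℂ := Matrix.fromBlocks A₁ 0 0 A₂ with hA
  have hdetA : IsUnit A.det := by rw [hdet]; exact isUnit_one
  -- lam⁻¹ ≠ lam
  have hinv : lam⁻¹ ≠ lam := by
    intro h
    have : lam * lam = 1 := by
      calc lam * lam = lam * lam⁻¹ := by rw [h]
        _ = 1 := mul_inv_cancel₀ hlam0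
    rcases mul_self_eq_one_iff.mp this with h1 | h1
    · exact hlam1 h1
    · exact hlam2 h1
  -- g is its own inverse
  have hginv : g⁻¹ = g := Matrix.inv_eq_right_inv hg2
  have hrev' : g * A * g = A⁻¹ := by rw [hginv] at hrev; exact hrev
  have hAgA : A * g * A = g := by
    have h1 : A * (g * A * g) = 1 := by rw [hrev']; exact Matrix.mul_nonsing_inv A hdetA
    have h2 : (A * g * A) * g = 1 := by rw [← h1]; noncomm_ring
    calc A * g * A = (A * g * A) * (g * g) := by rw [hg2, Matrix.mul_one]
      _ = ((A * g * A) * g) * g := by noncomm_ring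
      _ = g := by rw [h2, Matrix.one_mul]
  -- the two key commutation relations
  set X : Matrix (Fin n ⊕ Fin n) (Fin n ⊕ Fin n) ℂ := A - lam⁻¹ • 1 with hX
  set Y : Matrix (Fin n ⊕ Fin n) (Fin n ⊕ Fin n) ℂ := A - lam • 1 with hY
  have key1 : A * g * X = (-lam⁻¹) • (Y * g) := by
    rw [hX, hY, Matrix.mul_sub, Matrix.mul_smul, Matrix.mul_one, hAgA, Matrix.sub_mul,
      Matrix.smul_mul, Matrix.one_mul, smul_sub, smul_smul, neg_mul,
      inv_mul_cancel₀ hlam0, neg_smul, neg_smul, one_smul, sub_neg_eq_add]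
    abel
  have key2 : A * g * Y = (-lam) • (X * g) := by
    rw [hX, hY, Matrix.mul_sub, Matrix.mul_smul, Matrix.mul_one, hAgA, Matrix.sub_mul,
      Matrix.smul_mul, Matrix.one_mul, smul_sub, smul_smul, neg_mul,
      mul_inv_cancel₀ hlam0, neg_smul, neg_smul, one_smul, sub_neg_eq_add]
    abel
  have hAX : A * Y = Y * A := by rw [hY]; noncomm_ring
  have hAY : A * X = X * A := by rw [hX]; noncomm_ring
  have keyn1 := aux_conj_pow A g X Y (-lam⁻¹) key1 hAX n
  have keyn2 := aux_conj_pow A g Y X (-lam) key2 hAY n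
  -- Cayley–Hamilton: vanishing blocks
  have hCH1 : (A₁ - lam • 1) ^ n = 0 := by
    have h := Matrix.aeval_self_charpoly A₁
    rw [hA₁] at h
    simpa [map_pow, map_sub, Polynomial.aeval_X, Polynomial.aeval_C,
      Algebra.algebraMap_eq_smul_one] using h
  have hCH2 : (A₂ - lam⁻¹ • 1) ^ n = 0 := by
    have h := Matrix.aeval_self_charpoly A₂
    rw [hA₂] at h
    simpa [map_pow, map_sub, Polynomial.aeval_X, Polynomial.aeval_C,
      Algebra.algebraMap_eq_smul_one] using h
  -- block forms
  set E₁ : Matrix (Fin n) (Fin n) ℂ := (A₁ - lam⁻¹ • 1) ^ n with hE₁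
  set F₂ : Matrix (Fin n) (Fin n) ℂ := (A₂ - lam • 1) ^ n with hF₂
  have hXb : X = Matrix.fromBlocks (A₁ - lam⁻¹ • 1) 0 0 (A₂ - lam⁻¹ • 1) := by
    rw [hX, hA]
    ext i j
    rcases i with i | i <;> rcases j with j | j <;>
      simp [Matrix.one_apply, Sum.inl.injEq, Sum.inr.injEq]
  have hYb : Y = Matrix.fromBlocks (A₁ - lam • 1) 0 0 (A₂ - lam • 1) := by
    rw [hY, hA]
    ext i j
    rcases i with i | i <;> rcases j with j | j <;>
      simp [Matrix.one_apply, Sum.inl.injEq, Sum.inr.injEq]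
  have hXn : X ^ n = Matrix.fromBlocks E₁ 0 0 0 := by
    rw [hXb, aux_pow_blocks, hCH2, hE₁]
  have hYn : Y ^ n = Matrix.fromBlocks 0 0 0 F₂ := by
    rw [hYb, aux_pow_blocks, hCH1, hF₂]
  have hAn : A ^ n = Matrix.fromBlocks (A₁ ^ n) 0 0 (A₂ ^ n) := by
    rw [hA, aux_pow_blocks]
  -- determinants of blocks
  have hdetA₁ : A₁.det = lam ^ n := by
    rw [Matrix.det_eq_sign_charpoly_coeff, hA₁, Polynomial.coeff_zero_eq_eval_zero]
    simp [Fintype.card_fin, ← mul_pow]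
  have hdetA₂ : A₂.det = (lam⁻¹) ^ n := by
    rw [Matrix.det_eq_sign_charpoly_coeff, hA₂, Polynomial.coeff_zero_eq_eval_zero]
    simp [Fintype.card_fin, ← mul_pow]
  have hdetE₁ : IsUnit E₁.det := by
    rw [hE₁, Matrix.det_pow]
    have h1 : (A₁ - lam⁻¹ • 1) = -((lam⁻¹ • 1) - A₁) := by abel
    have h2 : ((lam⁻¹ • (1 : Matrix (Fin n) (Fin n) ℂ)) - A₁).det = (lam⁻¹ - lam) ^ n := by
      rw [← aux_eval_cp, hA₁]; simp
    rw [h1, Matrix.det_neg, h2]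
    apply IsUnit.pow
    apply IsUnit.mul
    · exact (isUnit_one.neg).pow _
    · exact (IsUnit.pow _ (isUnit_iff_ne_zero.mpr (sub_ne_zero.mpr hinv)))
  have hdetF₂ : IsUnit F₂.det := by
    rw [hF₂, Matrix.det_pow]
    have h1 : (A₂ - lam • 1) = -((lam • 1) - A₂) := by abel
    have h2 : ((lam • (1 : Matrix (Fin n) (Fin n) ℂ)) - A₂).det = (lam - lam⁻¹) ^ n := by
      rw [← aux_eval_cp, hA₂]; simp
    rw [h1, Matrix.det_neg, h2]
    apply IsUnit.pow
    apply IsUnit.mul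
    · exact (isUnit_one.neg).pow _
    · exact (IsUnit.pow _ (isUnit_iff_ne_zero.mpr (sub_ne_zero.mpr (Ne.symm hinv))))
  have hdetA₁n : IsUnit (A₁ ^ n).det := by
    rw [Matrix.det_pow, hdetA₁]
    exact (isUnit_iff_ne_zero.mpr (pow_ne_zero _ hlam0)).pow _
  have hdetA₂n : IsUnit (A₂ ^ n).det := by
    rw [Matrix.det_pow, hdetA₂]
    exact (isUnit_iff_ne_zero.mpr (pow_ne_zero _ (inv_ne_zero hlam0))).pow _
  -- blocks of g
  set p := g.toBlocks₁₁ with hp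
  set q := g.toBlocks₁₂ with hq
  set r := g.toBlocks₂₁ with hr
  set s := g.toBlocks₂₂ with hs
  have hgb : g = Matrix.fromBlocks p q r s := (Matrix.fromBlocks_toBlocks g).symm
  -- equation 1 : p = 0
  have hp0 : p = 0 := by
    rw [hAn, hXn, hYn, hgb] at keyn1
    simp only [Matrix.fromBlocks_multiply, Matrix.zero_mul, Matrix.mul_zero, add_zero,
      zero_add, Matrix.fromBlocks_smul, smul_zero] at keyn1
    have h11 := congrArg Matrix.toBlocks₁₁ keyn1
    simp only [Matrix.toBlocks_fromBlocks₁₁] at h11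
    exact aux_mid_zero _ _ _ hdetA₁n hdetE₁ h11
  have hs0 : s = 0 := by
    rw [hAn, hXn, hYn, hgb] at keyn2
    simp only [Matrix.fromBlocks_multiply, Matrix.zero_mul, Matrix.mul_zero, add_zero,
      zero_add, Matrix.fromBlocks_smul, smul_zero] at keyn2
    have h22 := congrArg Matrix.toBlocks₂₂ keyn2
    simp only [Matrix.toBlocks_fromBlocks₂₂] at h22
    exact aux_mid_zero _ _ _ hdetA₂n hdetF₂ h22
  -- g is block anti-diagonal
  have hgform : g = Matrix.fromBlocks 0 q r 0 := by rw [hgb, hp0, hs0]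
  have honeb : (1 : Matrix (Fin n ⊕ Fin n) (Fin n ⊕ Fin n) ℂ).toBlocks₁₁ = 1 := by
    ext i j; simp [Matrix.toBlocks₁₁, Matrix.one_apply]
  have hqr : q * r = 1 := by
    have h := hg2
    rw [hgform, Matrix.fromBlocks_multiply] at h
    have h11 := congrArg Matrix.toBlocks₁₁ h
    simpa [Matrix.toBlocks_fromBlocks₁₁, honeb] using h11
  -- compute det
  have hfac : Matrix.fromBlocks 0 q r 0 =
      Matrix.fromBlocks q 0 0 r * Matrix.fromBlocks 0 1 1 0 := by
    rw [Matrix.fromBlocks_multiply]; simp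
  rw [hgform, hfac, Matrix.det_mul, Matrix.det_fromBlocks_zero₂₁, aux_detJ,
    ← Matrix.det_mul, hqr, Matrix.det_one, one_mul]
end

section
/- Let λ ∈ ℂ∖{0,1,−1} and let A = A₁ ⊕ A₂ ∈ SL(2n,ℂ) be block diagonal, where A₁ ∈ GL(n,ℂ) has λ as its only eigenvalue, A₂ ∈ GL(n,ℂ) has λ⁻¹ as its only eigenvalue, and A is reversible in SL(2n,ℂ) (conjugate to A⁻¹ by an element of SL(2n,ℂ)). Then A is strongly reversible in SL(2n,ℂ) (a product of two involutions of SL(2n,ℂ)) if and only if n is even. -/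
open Polynomial Matrix



lemma sandwich_eq_zero {n : ℕ} (μ : ℂ) (hμ : μ ^ 2 ≠ 1)
    (B W : Matrix (Fin n) (Fin n) ℂ)
    (hB : B.charpoly = (X - C μ) ^ n)
    (h : B * W * B = W) : W = 0 := by
  have hNn : (B - μ • 1) ^ n = 0 := by
    have h0 := B.aeval_self_charpoly
    rw [hB] at h0
    simpa [map_pow, map_sub, Polynomial.aeval_X, Polynomial.aeval_C,
      Algebra.algebraMap_eq_smul_one] using h0
  set N := B - μ • 1 with hNdef
  have hBeq : B = μ • 1 + N := by rw [hNdef]; abel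
  have hexp : W = μ ^ 2 • W + μ • (N * W) + μ • (W * N) + N * (W * N) := by
    conv_lhs => rw [← h, hBeq]
    simp only [mul_add, add_mul, smul_mul_assoc, mul_smul_comm, mul_one, one_mul, mul_assoc]
    module
  have key : ∀ d i j, 2 * n ≤ i + j + d → N ^ i * (W * N ^ j) = 0 := by
    intro d
    induction d with
    | zero =>
      intro i j hij
      rcases le_or_gt n i with hi | hi
      · rw [pow_eq_zero_of_le hi hNn, zero_mul]
      · have hj : n ≤ j := by omega
        rw [pow_eq_zero_of_le hj hNn, mul_zero, mul_zero]
    | succ d ih =>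
      intro i j hij
      have h1 : N ^ i * (N * (W * N ^ j)) = 0 := by
        simpa only [pow_succ, mul_assoc] using ih (i+1) j (by omega)
      have h2 : N ^ i * (W * (N * N ^ j)) = 0 := by
        simpa only [pow_succ', mul_assoc] using ih i (j+1) (by omega)
      have h3 : N ^ i * (N * (W * (N * N ^ j))) = 0 := by
        have h3' := ih (i+1) (j+1) (by omega)
        rw [pow_succ, pow_succ'] at h3'
        simpa only [mul_assoc] using h3'
      have e : N ^ i * (W * N ^ j) = μ ^ 2 • (N ^ i * (W * N ^ j)) := by
        conv_lhs => rw [hexp]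
        simp only [mul_add, add_mul, mul_smul_comm, smul_mul_assoc, mul_assoc,
          h1, h2, h3, smul_zero, add_zero, zero_add]
      have e2 : (1 - μ ^ 2) • (N ^ i * (W * N ^ j)) = 0 := by
        rw [sub_smul, one_smul, ← e, sub_self]
      rcases smul_eq_zero.mp e2 with h4 | h4
      · exact absurd (by linear_combination -h4 : μ ^ 2 = 1) hμ
      · exact h4
  have := key (2 * n) 0 0 (by omega)
  simpa using this


lemma det_offdiag {n : ℕ} (X Y : Matrix (Fin n) (Fin n) ℂ) :
    (fromBlocks 0 X Y 0).det = (-1 : ℂ) ^ n * (X.det * Y.det) := by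
  set J : Matrix (Fin n ⊕ Fin n) (Fin n ⊕ Fin n) ℂ := fromBlocks 0 1 1 0 with hJdef
  set S : Matrix (Fin n ⊕ Fin n) (Fin n ⊕ Fin n) ℂ := fromBlocks 0 1 (-1) 0 with hSdef
  set E1 : Matrix (Fin n ⊕ Fin n) (Fin n ⊕ Fin n) ℂ := fromBlocks 1 1 0 1 with hE1def
  set E2 : Matrix (Fin n ⊕ Fin n) (Fin n ⊕ Fin n) ℂ := fromBlocks 1 0 (-1) 1 with hE2def
  set D : Matrix (Fin n ⊕ Fin n) (Fin n ⊕ Fin n) ℂ := fromBlocks (-1) 0 0 1 with hDdef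
  have hE1 : E1.det = 1 := by rw [hE1def, det_fromBlocks_zero₂₁]; simp
  have hE2 : E2.det = 1 := by rw [hE2def, det_fromBlocks_zero₁₂]; simp
  have hS : E1 * E2 * E1 = S := by
    rw [hE1def, hE2def, hSdef]; simp [fromBlocks_multiply]
  have hSdet : S.det = 1 := by rw [← hS, det_mul, det_mul, hE1, hE2]; ring
  have hD : S * D = J := by
    rw [hSdef, hDdef, hJdef]; simp [fromBlocks_multiply]
  have hDdet : D.det = (-1 : ℂ) ^ n := by
    rw [hDdef, det_fromBlocks_zero₂₁, det_one, mul_one,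
      show (-1 : Matrix (Fin n) (Fin n) ℂ) = -(1 : Matrix (Fin n) (Fin n) ℂ) from rfl, det_neg]
    simp
  have hJ : J.det = (-1 : ℂ) ^ n := by rw [← hD, det_mul, hSdet, hDdet, one_mul]
  have hmul : fromBlocks 0 X Y 0 * J = fromBlocks X 0 0 Y := by
    rw [hJdef]; simp [fromBlocks_multiply]
  have hh := congrArg Matrix.det hmul
  rw [det_mul, hJ, det_fromBlocks_zero₂₁] at hh
  have hsq : (-1 : ℂ) ^ n * (-1 : ℂ) ^ n = 1 := by
    rw [← pow_add, ← two_mul, pow_mul]; norm_num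
  calc (fromBlocks 0 X Y 0).det
      = (fromBlocks 0 X Y 0).det * ((-1:ℂ)^n * (-1:ℂ)^n) := by rw [hsq, mul_one]
    _ = (-1:ℂ)^n * (X.det * Y.det) := by rw [← mul_assoc, hh]; ring



/-- Let `λ ∉ {0, 1, -1}` and `A = A₁ ⊕ A₂ ∈ SL(2n, ℂ)` (block diagonal, realized over the
index type `Fin n ⊕ Fin n`), where `A₁` has `λ` as its only eigenvalue (characteristic
polynomial `(X - λ)ⁿ`), `A₂` has `λ⁻¹` as its only eigenvalue, and `A` is reversible in
`SL(2n, ℂ)`. Then `A` is strongly reversible in `SL(2n, ℂ)` iff `n` is even. -/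
theorem lambda_pair_strongly_reversible_iff {n : ℕ} (hn : 1 ≤ n) (lam : ℂ)
    (hlam0 : lam ≠ 0) (hlam1 : lam ≠ 1) (hlam2 : lam ≠ -1)
    (A₁ A₂ : Matrix (Fin n) (Fin n) ℂ)
    (hA₁ : A₁.charpoly = (Polynomial.X - Polynomial.C lam) ^ n)
    (hA₂ : A₂.charpoly = (Polynomial.X - Polynomial.C lam⁻¹) ^ n)
    (A : Matrix.SpecialLinearGroup (Fin n ⊕ Fin n) ℂ)
    (hA : (A : Matrix (Fin n ⊕ Fin n) (Fin n ⊕ Fin n) ℂ) = Matrix.fromBlocks A₁ 0 0 A₂)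
    (hrev : ∃ g : Matrix.SpecialLinearGroup (Fin n ⊕ Fin n) ℂ, g * A * g⁻¹ = A⁻¹) :
    (∃ g₁ g₂ : Matrix.SpecialLinearGroup (Fin n ⊕ Fin n) ℂ,
        g₁ * g₁ = 1 ∧ g₂ * g₂ = 1 ∧ A = g₁ * g₂) ↔ Even n := by
  have hlamsq : lam ^ 2 ≠ 1 := by
    intro h
    have h2 : (lam - 1) * (lam + 1) = 0 := by linear_combination h
    rcases mul_eq_zero.mp h2 with h3 | h3
    · exact hlam1 (by linear_combination h3)
    · exact hlam2 (by linear_combination h3)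
  have hlaminsq : (lam⁻¹) ^ 2 ≠ 1 := by
    intro h
    rw [inv_pow, inv_eq_one] at h
    exact hlamsq h
  have hdet12 : A₁.det * A₂.det = 1 := by
    have := A.prop
    rw [hA, det_fromBlocks_zero₂₁] at this
    exact this
  have hA1det : A₁.det ≠ 0 := left_ne_zero_of_mul_eq_one hdet12
  have hA2det : A₂.det ≠ 0 := right_ne_zero_of_mul_eq_one hdet12
  -- structure of any matrix G with A G A = G
  have main : ∀ G : Matrix (Fin n ⊕ Fin n) (Fin n ⊕ Fin n) ℂ,
      (A : Matrix (Fin n ⊕ Fin n) (Fin n ⊕ Fin n) ℂ) * G * A = G →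
      G = fromBlocks 0 G.toBlocks₁₂ G.toBlocks₂₁ 0 ∧
        A₁ * G.toBlocks₁₂ * A₂ = G.toBlocks₁₂ := by
    intro G hG
    rw [hA, ← fromBlocks_toBlocks G] at hG
    rw [fromBlocks_multiply, fromBlocks_multiply] at hG
    simp only [Matrix.zero_mul, Matrix.mul_zero, add_zero, zero_add] at hG
    have h11 := congrArg Matrix.toBlocks₁₁ hG
    have h12 := congrArg Matrix.toBlocks₁₂ hG
    have h21 := congrArg Matrix.toBlocks₂₁ hG
    have h22 := congrArg Matrix.toBlocks₂₂ hG
    simp only [toBlocks_fromBlocks₁₁, toBlocks_fromBlocks₁₂, toBlocks_fromBlocks₂₁,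
      toBlocks_fromBlocks₂₂] at h11 h12 h21 h22
    have hW : G.toBlocks₁₁ = 0 := sandwich_eq_zero lam hlamsq A₁ _ hA₁ h11
    have hZ : G.toBlocks₂₂ = 0 := sandwich_eq_zero lam⁻¹ hlaminsq A₂ _ hA₂ h22
    refine ⟨?_, h12⟩
    conv_lhs => rw [← fromBlocks_toBlocks G]
    rw [hW, hZ]
  constructor
  · rintro ⟨g₁, g₂, h1, h2, h12⟩
    have hAg : A * g₁ * A = g₁ := by
      rw [h12, mul_assoc (g₁*g₂) g₁ (g₁*g₂), ← mul_assoc g₁ g₁ g₂, h1, one_mul,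
        mul_assoc g₁ g₂ g₂, h2, mul_one]
    have hAgm : (A : Matrix (Fin n ⊕ Fin n) (Fin n ⊕ Fin n) ℂ) * (g₁ : Matrix (Fin n ⊕ Fin n) (Fin n ⊕ Fin n) ℂ) * (A : Matrix (Fin n ⊕ Fin n) (Fin n ⊕ Fin n) ℂ) = (g₁ : Matrix (Fin n ⊕ Fin n) (Fin n ⊕ Fin n) ℂ) := by
      have := congrArg (fun z : Matrix.SpecialLinearGroup (Fin n ⊕ Fin n) ℂ =>
        (z : Matrix (Fin n ⊕ Fin n) (Fin n ⊕ Fin n) ℂ)) hAg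
      simpa using this
    obtain ⟨hstruct, -⟩ := main _ hAgm
    set X := (g₁ : Matrix (Fin n ⊕ Fin n) (Fin n ⊕ Fin n) ℂ).toBlocks₁₂ with hXdef
    set Y := (g₁ : Matrix (Fin n ⊕ Fin n) (Fin n ⊕ Fin n) ℂ).toBlocks₂₁ with hYdef
    have hsq : (g₁ : Matrix (Fin n ⊕ Fin n) (Fin n ⊕ Fin n) ℂ) * (g₁ : Matrix (Fin n ⊕ Fin n) (Fin n ⊕ Fin n) ℂ) = 1 := by
      have := congrArg (fun z : Matrix.SpecialLinearGroup (Fin n ⊕ Fin n) ℂ =>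
        (z : Matrix (Fin n ⊕ Fin n) (Fin n ⊕ Fin n) ℂ)) h1
      simpa using this
    rw [hstruct, fromBlocks_multiply] at hsq
    simp only [Matrix.zero_mul, Matrix.mul_zero, add_zero, zero_add] at hsq
    rw [← fromBlocks_one] at hsq
    have hXY := congrArg Matrix.toBlocks₁₁ hsq
    simp only [toBlocks_fromBlocks₁₁] at hXY
    have hdet : ((g₁ : Matrix (Fin n ⊕ Fin n) (Fin n ⊕ Fin n) ℂ)).det = 1 := g₁.prop
    rw [hstruct, det_offdiag, ← det_mul, hXY, det_one, mul_one] at hdet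
    by_contra hodd
    rw [Nat.not_even_iff_odd] at hodd
    rw [hodd.neg_one_pow] at hdet
    norm_num at hdet
  · intro hev
    obtain ⟨g, hg⟩ := hrev
    have h1 : g * A = A⁻¹ * g := by rw [← hg]; group
    have hAgA : A * g * A = g := by
      rw [mul_assoc, h1, ← mul_assoc, mul_inv_cancel, one_mul]
    have hAgm : (A : Matrix (Fin n ⊕ Fin n) (Fin n ⊕ Fin n) ℂ) * (g : Matrix (Fin n ⊕ Fin n) (Fin n ⊕ Fin n) ℂ) * (A : Matrix (Fin n ⊕ Fin n) (Fin n ⊕ Fin n) ℂ) = (g : Matrix (Fin n ⊕ Fin n) (Fin n ⊕ Fin n) ℂ) := by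
      have := congrArg (fun z : Matrix.SpecialLinearGroup (Fin n ⊕ Fin n) ℂ =>
        (z : Matrix (Fin n ⊕ Fin n) (Fin n ⊕ Fin n) ℂ)) hAgA
      simpa using this
    obtain ⟨hstruct, hX⟩ := main _ hAgm
    set X := (g : Matrix (Fin n ⊕ Fin n) (Fin n ⊕ Fin n) ℂ).toBlocks₁₂ with hXdef
    set Y := (g : Matrix (Fin n ⊕ Fin n) (Fin n ⊕ Fin n) ℂ).toBlocks₂₁ with hYdef
    have hgdet : ((g : Matrix (Fin n ⊕ Fin n) (Fin n ⊕ Fin n) ℂ)).det = 1 := g.prop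
    rw [hstruct, det_offdiag, hev.neg_one_pow, one_mul] at hgdet
    have hXne : X.det ≠ 0 := left_ne_zero_of_mul_eq_one hgdet
    have e1 : X * A₂ = A₁⁻¹ * X := by
      calc X * A₂ = (A₁⁻¹ * A₁) * (X * A₂) := by
            rw [nonsing_inv_mul A₁ hA1det.isUnit, Matrix.one_mul]
        _ = A₁⁻¹ * (A₁ * X * A₂) := by
            simp only [Matrix.mul_assoc]
        _ = A₁⁻¹ * X := by rw [hX]
    have e2 : A₁ * X = X * A₂⁻¹ := by
      calc A₁ * X = (A₁ * X * A₂) * A₂⁻¹ := by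
            rw [Matrix.mul_assoc (A₁ * X) A₂ A₂⁻¹, mul_nonsing_inv A₂ hA2det.isUnit,
              Matrix.mul_one]
        _ = X * A₂⁻¹ := by rw [hX]
    set H : Matrix (Fin n ⊕ Fin n) (Fin n ⊕ Fin n) ℂ := fromBlocks 0 X X⁻¹ 0 with hHdef
    have hHdet : H.det = 1 := by
      rw [hHdef, det_offdiag, hev.neg_one_pow, one_mul, det_nonsing_inv,
        Ring.inverse_eq_inv, mul_inv_cancel₀ hXne]
    have hHH : H * H = 1 := by
      rw [hHdef, fromBlocks_multiply]
      simp only [Matrix.zero_mul, Matrix.mul_zero, add_zero, zero_add,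
        mul_nonsing_inv X hXne.isUnit, nonsing_inv_mul X hXne.isUnit]
      exact fromBlocks_one
    set g1 : Matrix.SpecialLinearGroup (Fin n ⊕ Fin n) ℂ := ⟨H, hHdet⟩ with hg1def
    have hg1c : (g1 : Matrix (Fin n ⊕ Fin n) (Fin n ⊕ Fin n) ℂ) = H := rfl
    have h1 : g1 * g1 = 1 := by
      apply Subtype.ext
      rw [Matrix.SpecialLinearGroup.coe_mul, hg1c, Matrix.SpecialLinearGroup.coe_one]
      exact hHH
    refine ⟨g1, g1 * A, h1, ?_, ?_⟩
    · have hHA : H * (A : Matrix (Fin n ⊕ Fin n) (Fin n ⊕ Fin n) ℂ) *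
          (H * (A : Matrix (Fin n ⊕ Fin n) (Fin n ⊕ Fin n) ℂ)) = 1 := by
        rw [hHdef, hA, fromBlocks_multiply, fromBlocks_multiply]
        simp only [Matrix.zero_mul, Matrix.mul_zero, add_zero, zero_add]
        have b1 : X * A₂ * (X⁻¹ * A₁) = 1 := by
          rw [e1, Matrix.mul_assoc, ← Matrix.mul_assoc X X⁻¹ A₁,
            mul_nonsing_inv X hXne.isUnit, Matrix.one_mul,
            nonsing_inv_mul A₁ hA1det.isUnit]
        have b2 : X⁻¹ * A₁ * (X * A₂) = 1 := by
          rw [Matrix.mul_assoc X⁻¹ A₁ (X * A₂), ← Matrix.mul_assoc A₁ X A₂, e2,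
            Matrix.mul_assoc X A₂⁻¹ A₂, nonsing_inv_mul A₂ hA2det.isUnit, Matrix.mul_one]
          exact nonsing_inv_mul X hXne.isUnit
        rw [b1, b2]
        exact fromBlocks_one
      apply Subtype.ext
      rw [Matrix.SpecialLinearGroup.coe_mul, Matrix.SpecialLinearGroup.coe_mul, hg1c,
        Matrix.SpecialLinearGroup.coe_one]
      exact hHA
    · rw [← mul_assoc, h1, one_mul]
end
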